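/- Let G be a graph with port set P = pG and signature ε = sG, and let W be a semi-Kekulé state of G. Then the cardinality of W|P is congruent to ε modulo 2. -/

import Mathlib

open scoped symmDiff

namespace Kekule

abbrev Node := ℕ
abbrev Graph := Finset (Finset Node)

/-- `G` is a graph: every edge is a 2-element set of nodes. -/
def IsGraph (G : Graph) : Prop := ∀ e ∈ G, e.card = 2

/-- The nodes of a graph: the elements of its edges. -/
def nodes (G : Graph) : Finset Node := G.biUnion id

/-- The number of edges of `G` containing `v`. -/
def deg (G : Graph) (v : Node) : ℕ := (G.filter (fun e => v ∈ e)).card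

/-- A port is a node contained in exactly one edge. -/
def ports (G : Graph) : Finset Node := (nodes G).filter (fun v => deg G v = 1)

/-- An internal node is a node that is not a port. -/
def internal (G : Graph) : Finset Node := (nodes G).filter (fun v => deg G v ≠ 1)

/-- A Kekulé state of `G`: a subgraph `W ⊆ G` such that every internal node
of `G` lies in exactly one edge of `W`. -/
def IsKekule (G W : Graph) : Prop := W ⊆ G ∧ ∀ v ∈ internal G, deg W v = 1

/-- A curve in `G`: a subgraph `C ⊆ G` such that every node of `C` that is
internal in `G` lies in exactly two edges of `C`. -/
def IsCurve (G C : Graph) : Prop :=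
  C ⊆ G ∧ ∀ v ∈ nodes C, v ∈ internal G → deg C v = 2

/-- `(C, W)` is an alternating curve in `G`: both are subgraphs of `G`,
`C` is a curve in `G`, and `W ∩ C` is a Kekulé state of `C`. -/
def IsAlternating (G C W : Graph) : Prop :=
  W ⊆ G ∧ IsCurve G C ∧ IsKekule C (W ∩ C)

/-- `W|P`: the set of ports in `P` that lie in some edge of `W`. -/
def rest (W : Graph) (P : Finset Node) : Finset Node := P ∩ nodes W

/-- The set of Kekulé port assignments of `G`. -/
def KP (G : Graph) : Set (Finset Node) :=
  {g | ∃ W, IsKekule G W ∧ rest W (ports G) = g}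

/-- A cell `K` over `P` is a Kekulé cell if it is the set of Kekulé port
assignments of some graph with port set `P`. -/
def IsKekuleCell (P : Finset Node) (K : Set (Finset Node)) : Prop :=
  ∃ G, IsGraph G ∧ ports G = P ∧ KP G = K

/-- A channel: a 2-element subset of `P`. -/
def IsChannel (P : Finset Node) (c : Finset Node) : Prop := c ⊆ P ∧ c.card = 2

/-- A port `p` is flexible for a cell `K`. -/
def Flexible (K : Set (Finset Node)) (p : Node) : Prop :=
  ∃ g ∈ K, ∃ g' ∈ K, p ∈ g ∧ p ∉ g'

/-- Hamming distance between two port assignments. -/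
def hdist (k k' : Finset Node) : ℕ := (k ∆ k').card

/-- The Hamming diameter of `K` equals `n`. -/
def HamDiamEq (K : Set (Finset Node)) (n : ℕ) : Prop :=
  (∃ k ∈ K, ∃ k' ∈ K, hdist k k' = n) ∧ ∀ k ∈ K, ∀ k' ∈ K, hdist k k' ≤ n

/-- `G` is connected: nonempty, and any two distinct nodes are joined by a walk. -/
def Connected (G : Graph) : Prop :=
  G.Nonempty ∧ ∀ p ∈ nodes G, ∀ q ∈ nodes G, p ≠ q →
    ∃ (n : ℕ) (f : ℕ → Node), f 0 = p ∧ f n = q ∧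
      ∀ i < n, ({f i, f (i + 1)} : Finset Node) ∈ G

/-- `C` is a simple path between `p` and `q`. -/
def IsSimplePath (C : Graph) (p q : Node) : Prop :=
  Connected C ∧ ports C = {p, q} ∧
    ∀ v ∈ nodes C, v ≠ p → v ≠ q → deg C v = 2

/-- A cycle: a connected graph all of whose nodes lie in exactly two edges. -/
def IsCycle (C : Graph) : Prop :=
  Connected C ∧ ∀ v ∈ nodes C, deg C v = 2

/-- A semi-Kekulé state of `G`: every internal node of `G` lies in an odd
number of edges of `W`. -/
def IsSemiKekule (G W : Graph) : Prop :=
  W ⊆ G ∧ ∀ v ∈ internal G, deg W v % 2 = 1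

/-- The signature of `G`. -/
def sig (G : Graph) : ℕ := (internal G).card % 2

/-- `G` is omniconjugated. -/
def Omniconjugated (G : Graph) : Prop :=
  2 ≤ (ports G).card ∧ KP G = {g | g ⊆ ports G ∧ g.card % 2 = sig G}

instance : Std.Commutative (α := Finset Node) (· ∆ ·) := ⟨symmDiff_comm⟩
instance : Std.Associative (α := Finset Node) (· ∆ ·) := ⟨symmDiff_assoc⟩

/-- The `⊕`-sum of a finite family of port assignments. -/
def xorSum (D : Finset (Finset Node)) : Finset Node := D.fold (· ∆ ·) ∅ id

/-! Every node of a semi-Kekulé state `W` has odd `W`-degree: an internal node by definition,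
a port of `G` met by `W` because its `G`-degree is already `1`. By the handshake lemma a graph
all of whose degrees are odd has an even number of nodes, and the nodes of `W` are exactly
the internal nodes of `G` together with `W|P`. -/

theorem mem_nodes {G : Graph} {v : Node} : v ∈ nodes G ↔ ∃ e ∈ G, v ∈ e := by
  simp [nodes]

theorem deg_pos_iff {G : Graph} {v : Node} : 0 < deg G v ↔ v ∈ nodes G := by
  simp [deg, Finset.card_pos, Finset.filter_nonempty_iff, mem_nodes]

theorem nodes_mono {W G : Graph} (h : W ⊆ G) : nodes W ⊆ nodes G :=
  Finset.biUnion_subset_biUnion_of_subset_left _ h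

theorem deg_mono {W G : Graph} (h : W ⊆ G) (v : Node) : deg W v ≤ deg G v :=
  Finset.card_le_card (Finset.filter_subset_filter _ h)

theorem IsGraph.mono {W G : Graph} (hG : IsGraph G) (h : W ⊆ G) : IsGraph W :=
  fun e he => hG e (h he)

theorem sum_deg_eq_sum_card (G : Graph) : ∑ v ∈ nodes G, deg G v = ∑ e ∈ G, e.card := by
  simp only [deg, Finset.card_filter]
  rw [Finset.sum_comm]
  refine Finset.sum_congr rfl fun e he => ?_
  rw [← Finset.card_filter, Finset.filter_mem_eq_inter,
    Finset.inter_eq_right.mpr fun v hv => mem_nodes.mpr ⟨e, he, hv⟩]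

theorem IsGraph.sum_deg_eq_two_mul_card {G : Graph} (hG : IsGraph G) :
    ∑ v ∈ nodes G, deg G v = 2 * G.card := by
  rw [sum_deg_eq_sum_card, Finset.sum_congr rfl hG, Finset.sum_const, smul_eq_mul, mul_comm]

theorem IsGraph.card_nodes_even_of_deg_odd {G : Graph} (hG : IsGraph G)
    (hodd : ∀ v ∈ nodes G, deg G v % 2 = 1) : (nodes G).card % 2 = 0 := by
  have hsum := congrArg (· % 2) hG.sum_deg_eq_two_mul_card
  simp only [Finset.sum_nat_mod, Finset.sum_congr rfl hodd, Finset.sum_const, smul_eq_mul,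
    mul_one] at hsum
  omega

theorem disjoint_rest_ports_internal (G W : Graph) :
    Disjoint (rest W (ports G)) (internal G) := by
  rw [Finset.disjoint_left]
  intro v hv hvi
  exact (Finset.mem_filter.mp hvi).2 (Finset.mem_filter.mp (Finset.mem_inter.mp hv).1).2

namespace IsSemiKekule

variable {G W : Graph}

theorem internal_subset_nodes (hW : IsSemiKekule G W) : internal G ⊆ nodes W := by
  intro v hv
  have hodd := hW.2 v hv
  rw [← deg_pos_iff]
  omega

theorem nodes_eq_rest_union_internal (hW : IsSemiKekule G W) :
    nodes W = rest W (ports G) ∪ internal G := by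
  refine Finset.Subset.antisymm (fun v hv => ?_)
    (Finset.union_subset Finset.inter_subset_right hW.internal_subset_nodes)
  have hvG := nodes_mono hW.1 hv
  by_cases hport : deg G v = 1
  · exact Finset.mem_union_left _ (Finset.mem_inter.mpr ⟨Finset.mem_filter.mpr ⟨hvG, hport⟩, hv⟩)
  · exact Finset.mem_union_right _ (Finset.mem_filter.mpr ⟨hvG, hport⟩)

theorem deg_odd (hW : IsSemiKekule G W) {v : Node} (hv : v ∈ nodes W) : deg W v % 2 = 1 := by
  by_cases hport : deg G v = 1
  · have hpos := deg_pos_iff.mpr hv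
    have hle := deg_mono hW.1 v
    omega
  · exact hW.2 v (Finset.mem_filter.mpr ⟨nodes_mono hW.1 hv, hport⟩)

end IsSemiKekule

/-- For a semi-Kekulé state `W` of `G`, the cardinality of
`W|P` is congruent to the signature of `G` modulo 2. -/
theorem statement11 (G : Graph) (hG : IsGraph G)
    (W : Graph) (hW : IsSemiKekule G W) :
    (rest W (ports G)).card % 2 = sig G := by
  have heven := (hG.mono hW.1).card_nodes_even_of_deg_odd fun _ => hW.deg_odd
  rw [hW.nodes_eq_rest_union_internal,
    Finset.card_union_of_disjoint (disjoint_rest_ports_internal G W)] at heven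
  rw [sig]
  omega

end Kekule
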